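/- arXiv:1008.1375 — 4 statements merged into one kernel-verified Lean document; each statement's English description precedes it below -/
import Mathlib

section
/- Let f₁,…,fₙ and g₁,…,gₙ be real-analytic functions on ℝ. Then Σᵢ fᵢ(x)·gᵢ⁽ᵏ⁾(x) = 0 for all x ∈ ℝ and all k ≥ 0 if and only if Σᵢ fᵢ(x)·gᵢ(y) = 0 for all x, y ∈ ℝ. -/
/-!
For fixed `x`, the function `y ↦ Σᵢ fᵢ(x) gᵢ(y)` is analytic and its `k`-th derivative at `x` is
`Σᵢ fᵢ(x) gᵢ⁽ᵏ⁾(x)`. The derivative identities say it vanishes to infinite order at `x`, so it is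
identically zero by the identity theorem; conversely the zero function has zero derivatives.
-/

theorem eq_zero_of_forall_iteratedDeriv_eq_zero {𝕜 E : Type*} [NontriviallyNormedField 𝕜]
    [CharZero 𝕜] [PreconnectedSpace 𝕜] [NormedAddCommGroup E] [NormedSpace 𝕜 E] [CompleteSpace E]
    {f : 𝕜 → E} (hf : ∀ z, AnalyticAt 𝕜 f z) {z₀ : 𝕜} (h : ∀ k, iteratedDeriv k f z₀ = 0) :
    f = 0 := by
  refine (AnalyticOnNhd.analyticOrderAt_eq_top_iff_eq_zero z₀ hf).mp ?_
  refine top_le_iff.mp (ENat.forall_natCast_le_iff_le.mp fun n _ => ?_)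
  exact (natCast_le_analyticOrderAt_iff_iteratedDeriv_eq_zero (hf z₀)).mpr fun k _ => h k

theorem iteratedDeriv_sum_const_mul {𝕜 ι : Type*} [NontriviallyNormedField 𝕜] (s : Finset ι)
    (c : ι → 𝕜) {g : ι → 𝕜 → 𝕜} {k : ℕ} {x : 𝕜} (hg : ∀ i ∈ s, ContDiffAt 𝕜 k (g i) x) :
    iteratedDeriv k (fun y => ∑ i ∈ s, c i * g i y) x = ∑ i ∈ s, c i * iteratedDeriv k (g i) x := by
  rw [iteratedDeriv_fun_sum fun i hi => contDiffAt_const.mul (hg i hi)]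
  simp only [iteratedDeriv_const_mul_field]

theorem stmt_4_general (n : ℕ) (f g : Fin n → ℝ → ℝ)
    (hg : ∀ i, ∀ x : ℝ, AnalyticAt ℝ (g i) x) :
    (∀ (x : ℝ) (k : ℕ), ∑ i, f i x * iteratedDeriv k (g i) x = 0) ↔
      (∀ x y : ℝ, ∑ i, f i x * g i y = 0) := by
  have iteratedDeriv_combination (x z : ℝ) (k : ℕ) :
      iteratedDeriv k (fun y => ∑ i, f i x * g i y) z = ∑ i, f i x * iteratedDeriv k (g i) z :=
    iteratedDeriv_sum_const_mul _ _ fun i _ => (hg i z).contDiffAt.of_le le_top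
  constructor
  · intro H x y
    have hcomb : (fun y => ∑ i, f i x * g i y) = 0 := by
      refine eq_zero_of_forall_iteratedDeriv_eq_zero (fun z => ?_) (z₀ := x) fun k => ?_
      · exact Finset.analyticAt_fun_sum _ fun i _ => analyticAt_const.mul (hg i z)
      · rw [iteratedDeriv_combination, H x k]
    exact congrFun hcomb y
  · intro H x k
    rw [← iteratedDeriv_combination, funext (H x)]
    simp

/-- For real-analytic functions `fᵢ, gᵢ`, the identities
`Σᵢ fᵢ(x) gᵢ⁽ᵏ⁾(x) = 0` for all `x` and all `k ≥ 0` hold iff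
`Σᵢ fᵢ(x) gᵢ(y) = 0` for all `x, y`. -/
theorem stmt_4 (n : ℕ) (f g : Fin n → ℝ → ℝ)
    (hf : ∀ i, ∀ x : ℝ, AnalyticAt ℝ (f i) x)
    (hg : ∀ i, ∀ x : ℝ, AnalyticAt ℝ (g i) x) :
    (∀ (x : ℝ) (k : ℕ), ∑ i, f i x * iteratedDeriv k (g i) x = 0) ↔
      (∀ x y : ℝ, ∑ i, f i x * g i y = 0) :=
  stmt_4_general n f g hg
end

section
/- Let φ : ℝ × ℝ → ℝ be smooth with φ_x nowhere zero, and suppose φ satisfies φ_t = −(1/2)φ² + c₀/2 and φ_xxx + u·φ_x + (1/2)φ² = c₀/2, where u is defined by u = (1/φ_x)·(c₀/2 − (1/2)φ² − φ_xxx). Then the pair (u, v) with v = φ_x satisfies the Ito system u_t = 3v_x and v_t = (u v)_x + v_xxx. -/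
/-- Partial derivative in the first (space) variable. -/
noncomputable def pdx (f : ℝ → ℝ → ℝ) : ℝ → ℝ → ℝ := fun x t => deriv (fun y => f y t) x

/-- Partial derivative in the second (time) variable. -/
noncomputable def pdt (f : ℝ → ℝ → ℝ) : ℝ → ℝ → ℝ := fun x t => deriv (fun s => f x s) t

open Function

lemma hasDerivAt_sx (f : ℝ → ℝ → ℝ) (h : ContDiff ℝ (⊤ : ℕ∞) (uncurry f)) (x t : ℝ) :
    HasDerivAt (fun y => f y t) (fderiv ℝ (uncurry f) (x, t) (1, 0)) x := by
  have h1 : HasFDerivAt (uncurry f) (fderiv ℝ (uncurry f) (x, t)) (x, t) :=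
    ((h.differentiable (by simp)) _).hasFDerivAt
  have h2 : HasDerivAt (fun y : ℝ => (y, t)) ((1 : ℝ), (0 : ℝ)) x :=
    (hasDerivAt_id x).prodMk (hasDerivAt_const x t)
  exact h1.comp_hasDerivAt x h2

lemma hasDerivAt_st (f : ℝ → ℝ → ℝ) (h : ContDiff ℝ (⊤ : ℕ∞) (uncurry f)) (x t : ℝ) :
    HasDerivAt (fun s => f x s) (fderiv ℝ (uncurry f) (x, t) (0, 1)) t := by
  have h1 : HasFDerivAt (uncurry f) (fderiv ℝ (uncurry f) (x, t)) (x, t) :=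
    ((h.differentiable (by simp)) _).hasFDerivAt
  have h2 : HasDerivAt (fun s : ℝ => (x, s)) ((0 : ℝ), (1 : ℝ)) t :=
    (hasDerivAt_const t x).prodMk (hasDerivAt_id t)
  exact h1.comp_hasDerivAt t h2

lemma pdx_eq (f : ℝ → ℝ → ℝ) (h : ContDiff ℝ (⊤ : ℕ∞) (uncurry f)) (x t : ℝ) :
    pdx f x t = fderiv ℝ (uncurry f) (x, t) (1, 0) := (hasDerivAt_sx f h x t).deriv

lemma pdt_eq (f : ℝ → ℝ → ℝ) (h : ContDiff ℝ (⊤ : ℕ∞) (uncurry f)) (x t : ℝ) :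
    pdt f x t = fderiv ℝ (uncurry f) (x, t) (0, 1) := (hasDerivAt_st f h x t).deriv

lemma hasDerivAt_pdx (f : ℝ → ℝ → ℝ) (h : ContDiff ℝ (⊤ : ℕ∞) (uncurry f)) (x t : ℝ) :
    HasDerivAt (fun y => f y t) (pdx f x t) x := by
  rw [pdx_eq f h]; exact hasDerivAt_sx f h x t

lemma hasDerivAt_pdt (f : ℝ → ℝ → ℝ) (h : ContDiff ℝ (⊤ : ℕ∞) (uncurry f)) (x t : ℝ) :
    HasDerivAt (fun s => f x s) (pdt f x t) t := by
  rw [pdt_eq f h]; exact hasDerivAt_st f h x t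

lemma contDiff_pdx (f : ℝ → ℝ → ℝ) (h : ContDiff ℝ (⊤ : ℕ∞) (uncurry f)) :
    ContDiff ℝ (⊤ : ℕ∞) (uncurry (pdx f)) := by
  have e : uncurry (pdx f) = fun p : ℝ × ℝ => fderiv ℝ (uncurry f) p (1, 0) :=
    funext fun p => pdx_eq f h p.1 p.2
  rw [e]
  exact (h.fderiv_right (by simp)).clm_apply contDiff_const

/-- Clairaut for smooth functions. -/
lemma pdt_pdx_swap (f : ℝ → ℝ → ℝ) (h : ContDiff ℝ (⊤ : ℕ∞) (uncurry f)) (x t : ℝ) :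
    pdt (pdx f) x t = pdx (pdt f) x t := by
  set F := uncurry f
  have hF : Differentiable ℝ F := h.differentiable (by simp)
  have hDf : Differentiable ℝ (fderiv ℝ F) := (h.fderiv_right (m := (⊤ : ℕ∞)) (by simp)).differentiable (by simp)
  have key : ∀ v w : ℝ × ℝ, fderiv ℝ (fun p => fderiv ℝ F p v) (x, t) w =
      fderiv ℝ (fderiv ℝ F) (x, t) w v := by
    intro v w
    have h1 : HasFDerivAt (fun p => fderiv ℝ F p v)
        ((ContinuousLinearMap.apply ℝ ℝ v).comp (fderiv ℝ (fderiv ℝ F) (x, t))) (x, t) :=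
      (ContinuousLinearMap.apply ℝ ℝ v).hasFDerivAt.comp (x, t) (hDf (x, t)).hasFDerivAt
    rw [h1.fderiv]; rfl
  have sym : fderiv ℝ (fderiv ℝ F) (x, t) ((0 : ℝ), (1 : ℝ)) ((1 : ℝ), (0 : ℝ)) =
      fderiv ℝ (fderiv ℝ F) (x, t) ((1 : ℝ), (0 : ℝ)) ((0 : ℝ), (1 : ℝ)) :=
    second_derivative_symmetric (fun y => (hF y).hasFDerivAt)
      (hDf (x, t)).hasFDerivAt _ _
  have e1 : uncurry (pdx f) = fun p : ℝ × ℝ => fderiv ℝ F p (1, 0) :=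
    funext fun p => pdx_eq f h p.1 p.2
  have e2 : uncurry (pdt f) = fun p : ℝ × ℝ => fderiv ℝ F p (0, 1) :=
    funext fun p => pdt_eq f h p.1 p.2
  have hpx : ContDiff ℝ (⊤ : ℕ∞) (uncurry (pdx f)) := contDiff_pdx f h
  have hpt : ContDiff ℝ (⊤ : ℕ∞) (uncurry (pdt f)) := by
    rw [e2]; exact (h.fderiv_right (by simp)).clm_apply contDiff_const
  rw [pdt_eq (pdx f) hpx, pdx_eq (pdt f) hpt, e1, e2, key, key, sym]

/-- The construction from the second constraint of the Ito Lax pair yields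
genuine solutions of the Ito system `u_t = 3v_x`, `v_t = (uv)_x + v_xxx`. -/
theorem stmt_9 (φ : ℝ → ℝ → ℝ) (c₀ : ℝ)
    (hφ : ContDiff ℝ (⊤ : ℕ∞) (Function.uncurry φ))
    (hφx : ∀ x t, pdx φ x t ≠ 0)
    (ht : ∀ x t, pdt φ x t = -(1 / 2) * φ x t ^ 2 + c₀ / 2)
    (u : ℝ → ℝ → ℝ)
    (hu : ∀ x t, u x t =
      (c₀ / 2 - (1 / 2) * φ x t ^ 2 - pdx (pdx (pdx φ)) x t) / pdx φ x t)
    (hx : ∀ x t, pdx (pdx (pdx φ)) x t + u x t * pdx φ x t + (1 / 2) * φ x t ^ 2 = c₀ / 2) :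
    (∀ x t, pdt u x t = 3 * pdx (fun x t => pdx φ x t) x t) ∧
    (∀ x t, pdt (fun x t => pdx φ x t) x t =
      pdx (fun x t => u x t * pdx φ x t) x t + pdx (pdx (pdx (fun x t => pdx φ x t))) x t) := by
  have h1 : ContDiff ℝ (⊤ : ℕ∞) (uncurry (pdx φ)) := contDiff_pdx φ hφ
  have h2 : ContDiff ℝ (⊤ : ℕ∞) (uncurry (pdx (pdx φ))) := contDiff_pdx _ h1
  have h3 : ContDiff ℝ (⊤ : ℕ∞) (uncurry (pdx (pdx (pdx φ)))) := contDiff_pdx _ h2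
  set P1 := pdx φ with hP1
  set P2 := pdx (pdx φ) with hP2
  set P3 := pdx (pdx (pdx φ)) with hP3
  -- pdt φ as a function
  have htf : pdt φ = fun x t => -(1 / 2) * φ x t ^ 2 + c₀ / 2 := funext fun x => funext fun t => ht x t
  -- pdx T
  have hT1 : ∀ x t, pdx (fun x t => -(1 / 2) * φ x t ^ 2 + c₀ / 2) x t
      = -(φ x t * P1 x t) := by
    intro x t
    have h := (((hasDerivAt_pdx φ hφ x t).pow 2).const_mul (-(1/2) : ℝ)).add_const (c₀ / 2)
    have := h.deriv
    simp only [Pi.pow_def, Pi.mul_def, Pi.add_def, Pi.neg_def, Pi.sub_def, Pi.div_def, hP1, hP2, hP3, pdx] at this ⊢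
    rw [this]; try ring
  -- function version
  have hT1f : pdx (fun x t => -(1 / 2) * φ x t ^ 2 + c₀ / 2)
      = fun x t => -(φ x t * P1 x t) := funext fun x => funext fun t => hT1 x t
  have hT2 : ∀ x t, pdx (fun x t => -(φ x t * P1 x t)) x t
      = -(P1 x t * P1 x t + φ x t * P2 x t) := by
    intro x t
    have h := (((hasDerivAt_pdx φ hφ x t).mul (hasDerivAt_pdx P1 h1 x t)).neg)
    have := h.deriv
    simp only [Pi.pow_def, Pi.mul_def, Pi.add_def, Pi.neg_def, Pi.sub_def, Pi.div_def, hP1, hP2, hP3, pdx] at this ⊢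
    rw [this]; try ring
  have hT2f : pdx (fun x t => -(φ x t * P1 x t))
      = fun x t => -(P1 x t * P1 x t + φ x t * P2 x t) := funext fun x => funext fun t => hT2 x t
  have hT3 : ∀ x t, pdx (fun x t => -(P1 x t * P1 x t + φ x t * P2 x t)) x t
      = -(3 * P1 x t * P2 x t + φ x t * P3 x t) := by
    intro x t
    have h := ((((hasDerivAt_pdx P1 h1 x t).mul (hasDerivAt_pdx P1 h1 x t)).add
      ((hasDerivAt_pdx φ hφ x t).mul (hasDerivAt_pdx P2 h2 x t))).neg)
    have := h.deriv
    simp only [Pi.pow_def, Pi.mul_def, Pi.add_def, Pi.neg_def, Pi.sub_def, Pi.div_def, hP1, hP2, hP3, pdx] at this ⊢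
    rw [this]; try ring
  -- swaps
  have sw1 : ∀ x t, pdt P1 x t = -(φ x t * P1 x t) := by
    intro x t
    rw [pdt_pdx_swap φ hφ, htf, hT1]
  have sw1f : pdt P1 = fun x t => -(φ x t * P1 x t) := funext fun x => funext fun t => sw1 x t
  have sw2 : ∀ x t, pdt P2 x t = -(P1 x t * P1 x t + φ x t * P2 x t) := by
    intro x t
    rw [pdt_pdx_swap P1 h1, sw1f, hT2]
  have sw2f : pdt P2 = fun x t => -(P1 x t * P1 x t + φ x t * P2 x t) :=
    funext fun x => funext fun t => sw2 x t
  have sw3 : ∀ x t, pdt P3 x t = -(3 * P1 x t * P2 x t + φ x t * P3 x t) := by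
    intro x t
    rw [pdt_pdx_swap P2 h2, sw2f, hT3]
  constructor
  · intro x t
    -- u = (T - P3)/P1
    have huf : ∀ s, u x s = (-(1 / 2) * φ x s ^ 2 + c₀ / 2 - P3 x s) / P1 x s := by
      intro s; rw [hu]; ring_nf
    have hnum : HasDerivAt (fun s => -(1 / 2) * φ x s ^ 2 + c₀ / 2 - P3 x s)
        (-(1 / 2) * (2 * φ x t * pdt φ x t) - pdt P3 x t) t := by
      have hp : HasDerivAt (fun s => φ x s) (pdt φ x t) t := hasDerivAt_pdt φ hφ x t
      have h := ((((hp.pow 2).const_mul (-(1/2) : ℝ)).add_const (c₀ / 2)).sub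
        (hasDerivAt_pdt P3 h3 x t))
      simp only [Pi.pow_def, Pi.sub_def] at h; refine h.congr_deriv ?_; ring
    have hden : HasDerivAt (fun s => P1 x s) (pdt P1 x t) t := hasDerivAt_pdt P1 h1 x t
    have hdiv := hnum.div hden (hφx x t)
    have : pdt u x t = deriv (fun s => (-(1 / 2) * φ x s ^ 2 + c₀ / 2 - P3 x s) / P1 x s) t := by
      simp only [pdt]
      congr 1
      exact funext fun s => huf s
    simp only [Pi.div_def] at hdiv; rw [this, hdiv.deriv, ht, sw1, sw3]
    have h1x := hφx x t
    field_simp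
    ring
  · intro x t
    have key : (fun x t => u x t * P1 x t)
        = fun x t => -(1 / 2) * φ x t ^ 2 + c₀ / 2 - P3 x t := by
      funext y s
      have := hx y s
      linarith
    have lhs : pdt (fun x t => P1 x t) x t = -(φ x t * P1 x t) := sw1 x t
    have rhs1 : pdx (fun x t => u x t * P1 x t) x t
        = -(φ x t * P1 x t) - pdx P3 x t := by
      rw [key]
      have h := ((((hasDerivAt_pdx φ hφ x t).pow 2).const_mul (-(1/2) : ℝ)).add_const
        (c₀ / 2)).sub (hasDerivAt_pdx P3 h3 x t)
      have hd := h.deriv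
      simp only [Pi.pow_def, Pi.mul_def, Pi.add_def, Pi.neg_def, Pi.sub_def, Pi.div_def, hP1, hP3, pdx] at hd ⊢
      rw [hd]; try ring
    have rhs2 : pdx (pdx (pdx (fun x t => P1 x t))) x t = pdx P3 x t := rfl
    rw [lhs, rhs1, rhs2]
    ring
end

section
/- Let u(x,t) solve the KdV equation u_t = 6uu_x + u_xxx, let λ be a constant, and let y₃, y₈ satisfy ∂ₓy₃ = −y₈, ∂ₜy₃ = u_x − 2(u + 2λ)y₈, ∂ₓy₈ = λ − u − y₈², ∂ₜy₈ = 2u_x y₈ − 2(u + 2λ)(u + y₈² − λ) − u_xx. Then g := α·e^{−2y₃} + β·u + γ (for any constants α, β, γ) satisfies ∂ₜ g = ∂ₓ³ g + 6u·∂ₓ g. -/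
lemma slice_diffx {f : ℝ → ℝ → ℝ} (hf : ContDiff ℝ (⊤ : ℕ∞) (Function.uncurry f))
    (x t : ℝ) : DifferentiableAt ℝ (fun y => f y t) x :=
  (hf.differentiable (by simp) (x, t)).comp (g := Function.uncurry f) (f := fun y : ℝ => (y, t)) x
    (differentiableAt_id.prodMk (differentiableAt_const t))

lemma slice_difft {f : ℝ → ℝ → ℝ} (hf : ContDiff ℝ (⊤ : ℕ∞) (Function.uncurry f))
    (x t : ℝ) : DifferentiableAt ℝ (fun s => f x s) t :=
  (hf.differentiable (by simp) (x, t)).comp t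
    ((differentiableAt_const x).prodMk differentiableAt_id)

lemma pdx_eq_fderiv {f : ℝ → ℝ → ℝ} (hf : ContDiff ℝ (⊤ : ℕ∞) (Function.uncurry f))
    (x t : ℝ) : pdx f x t = fderiv ℝ (Function.uncurry f) (x, t) (1, 0) := by
  have h1 : HasDerivAt (fun y : ℝ => (y, t)) ((1 : ℝ), (0 : ℝ)) x :=
    HasDerivAt.prodMk (hasDerivAt_id x) (hasDerivAt_const x t)
  have h2 := ((hf.differentiable (by simp) (x, t)).hasFDerivAt).comp_hasDerivAt x h1
  exact h2.deriv

lemma contDiff_pdx_s14 {f : ℝ → ℝ → ℝ} (hf : ContDiff ℝ (⊤ : ℕ∞) (Function.uncurry f)) :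
    ContDiff ℝ (⊤ : ℕ∞) (Function.uncurry (pdx f)) := by
  have h : Function.uncurry (pdx f)
      = fun p : ℝ × ℝ => fderiv ℝ (Function.uncurry f) p (1, 0) := by
    funext p
    exact pdx_eq_fderiv hf p.1 p.2
  rw [h]
  exact (hf.fderiv_right (by simp)).clm_apply contDiff_const

/-- For the Wahlquist–Estabrook pseudopotentials `y₃, y₈` of the KdV equation,
the function `g = α e^{−2y₃} + βu + γ` satisfies the functional equation
`g_t = g_xxx + 6u g_x`. -/
theorem stmt_14 (u y3 y8 : ℝ → ℝ → ℝ) (l α β γ : ℝ)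
    (hu : ContDiff ℝ (⊤ : ℕ∞) (Function.uncurry u))
    (hy3 : ContDiff ℝ (⊤ : ℕ∞) (Function.uncurry y3))
    (hy8 : ContDiff ℝ (⊤ : ℕ∞) (Function.uncurry y8))
    (hKdV : ∀ x t, pdt u x t = 6 * u x t * pdx u x t + pdx (pdx (pdx u)) x t)
    (h3x : ∀ x t, pdx y3 x t = -(y8 x t))
    (h3t : ∀ x t, pdt y3 x t = pdx u x t - 2 * (u x t + 2 * l) * y8 x t)
    (h8x : ∀ x t, pdx y8 x t = l - u x t - y8 x t ^ 2)
    (h8t : ∀ x t, pdt y8 x t =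
      2 * pdx u x t * y8 x t - 2 * (u x t + 2 * l) * (u x t + y8 x t ^ 2 - l)
        - pdx (pdx u) x t) :
    ∀ x t, pdt (fun x t => α * Real.exp (-2 * y3 x t) + β * u x t + γ) x t
      = pdx (pdx (pdx (fun x t => α * Real.exp (-2 * y3 x t) + β * u x t + γ))) x t
        + 6 * u x t * pdx (fun x t => α * Real.exp (-2 * y3 x t) + β * u x t + γ) x t := by
  set G : ℝ → ℝ → ℝ := fun x t => α * Real.exp (-2 * y3 x t) + β * u x t + γ with hG
  have hu' := contDiff_pdx_s14 hu
  have hu'' := contDiff_pdx_s14 hu'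
  have Hy3 : ∀ x t, HasDerivAt (fun y => y3 y t) (-(y8 x t)) x := by
    intro x t
    have h := (slice_diffx hy3 x t).hasDerivAt
    have e : deriv (fun y => y3 y t) x = -(y8 x t) := h3x x t
    rwa [e] at h
  have Hy8 : ∀ x t, HasDerivAt (fun y => y8 y t) (l - u x t - y8 x t ^ 2) x := by
    intro x t
    have h := (slice_diffx hy8 x t).hasDerivAt
    have e : deriv (fun y => y8 y t) x = l - u x t - y8 x t ^ 2 := h8x x t
    rwa [e] at h
  have Hu : ∀ x t, HasDerivAt (fun y => u y t) (pdx u x t) x :=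
    fun x t => (slice_diffx hu x t).hasDerivAt
  have Hux : ∀ x t, HasDerivAt (fun y => pdx u y t) (pdx (pdx u) x t) x :=
    fun x t => (slice_diffx hu' x t).hasDerivAt
  have Huxx : ∀ x t, HasDerivAt (fun y => pdx (pdx u) y t) (pdx (pdx (pdx u)) x t) x :=
    fun x t => (slice_diffx hu'' x t).hasDerivAt
  have HE : ∀ x t, HasDerivAt (fun y => Real.exp (-2 * y3 y t))
      (Real.exp (-2 * y3 x t) * (2 * y8 x t)) x := by
    intro x t
    have h := ((Hy3 x t).const_mul (-2)).exp
    convert h using 1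
    ring
  have H1 : ∀ x t, pdx G x t
      = α * (Real.exp (-2 * y3 x t) * (2 * y8 x t)) + β * pdx u x t := by
    intro x t
    have h : HasDerivAt (fun y => G y t)
        (α * (Real.exp (-2 * y3 x t) * (2 * y8 x t)) + β * pdx u x t) x := by
      simp only [hG]
      exact (((HE x t).const_mul α).add ((Hu x t).const_mul β)).add_const γ
    exact h.deriv
  have H2 : ∀ x t, pdx (pdx G) x t
      = α * (Real.exp (-2 * y3 x t) * (2 * y8 x t ^ 2 - 2 * u x t + 2 * l))
        + β * pdx (pdx u) x t := by
    intro x t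
    have hfun : (fun y => pdx G y t)
        = fun y => α * (Real.exp (-2 * y3 y t) * (2 * y8 y t)) + β * pdx u y t :=
      funext fun y => H1 y t
    have h : HasDerivAt (fun y => pdx G y t)
        (α * (Real.exp (-2 * y3 x t) * (2 * y8 x t ^ 2 - 2 * u x t + 2 * l))
          + β * pdx (pdx u) x t) x := by
      rw [hfun]
      have h0 := (((HE x t).mul ((Hy8 x t).const_mul 2)).const_mul α).add
        ((Hux x t).const_mul β)
      exact h0.congr_deriv (by ring)
    exact h.deriv
  have H3 : ∀ x t, pdx (pdx (pdx G)) x t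
      = α * (Real.exp (-2 * y3 x t)
          * (8 * l * y8 x t - 8 * u x t * y8 x t - 2 * pdx u x t))
        + β * pdx (pdx (pdx u)) x t := by
    intro x t
    have hfun : (fun y => pdx (pdx G) y t)
        = fun y => α * (Real.exp (-2 * y3 y t)
            * (2 * y8 y t ^ 2 - 2 * u y t + 2 * l)) + β * pdx (pdx u) y t :=
      funext fun y => H2 y t
    have h : HasDerivAt (fun y => pdx (pdx G) y t)
        (α * (Real.exp (-2 * y3 x t)
            * (8 * l * y8 x t - 8 * u x t * y8 x t - 2 * pdx u x t))
          + β * pdx (pdx (pdx u)) x t) x := by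
      rw [hfun]
      have hpoly : HasDerivAt (fun y => 2 * y8 y t ^ 2 - 2 * u y t + 2 * l)
          (2 * (2 * y8 x t ^ 1 * (l - u x t - y8 x t ^ 2)) - 2 * pdx u x t) x :=
        ((((Hy8 x t).pow 2).const_mul 2).sub ((Hu x t).const_mul 2)).add_const (2 * l)
      have h0 := (((HE x t).mul hpoly).const_mul α).add ((Huxx x t).const_mul β)
      exact h0.congr_deriv (by ring)
    exact h.deriv
  intro x t
  have Hy3t : HasDerivAt (fun s => y3 x s)
      (pdx u x t - 2 * (u x t + 2 * l) * y8 x t) t := by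
    have h := (slice_difft hy3 x t).hasDerivAt
    have e : deriv (fun s => y3 x s) t = pdx u x t - 2 * (u x t + 2 * l) * y8 x t := h3t x t
    rwa [e] at h
  have Hut : HasDerivAt (fun s => u x s) (pdt u x t) t :=
    (slice_difft hu x t).hasDerivAt
  have HT : pdt G x t
      = α * (Real.exp (-2 * y3 x t)
          * (-2 * (pdx u x t - 2 * (u x t + 2 * l) * y8 x t)))
        + β * pdt u x t := by
    have h : HasDerivAt (fun s => G x s)
        (α * (Real.exp (-2 * y3 x t)
            * (-2 * (pdx u x t - 2 * (u x t + 2 * l) * y8 x t)))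
          + β * pdt u x t) t := by
      simp only [hG]
      have hexp := (Hy3t.const_mul (-2)).exp
      exact ((hexp.const_mul α).add (Hut.const_mul β)).add_const γ
    exact h.deriv
  rw [HT, H3 x t, H1 x t, hKdV x t]
  ring
end

section
/- Fix n ≥ 1, positive pairwise-distinct constants κ₁,…,κₙ, constants c₁,…,cₙ and θ₁,…,θₙ, and suppose N₁,…,Nₙ : ℝ → ℝ are smooth functions satisfying the linear system Nₗ(x) = e^{−2κₗx+θₗ}(1 + Σⱼ cⱼNⱼ(x)/(κₗ+κⱼ)) for l = 1,…,n. Define u = 2Σⱼ cⱼ Nⱼ'. Then each Nₗ satisfies Nₗ'' + u·Nₗ = −2κₗ·Nₗ'. -/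
open Filter Matrix Set Topology

/-- The reflectionless inverse-scattering functions `Nₗ` satisfy
`Nₗ'' + u Nₗ = −2κₗ Nₗ'` where `u = 2 Σⱼ cⱼ Nⱼ'`. -/
theorem stmt_17 (n : ℕ) (hn : 1 ≤ n)
    (κ : Fin n → ℝ) (hκpos : ∀ l, 0 < κ l) (hκ : Function.Injective κ)
    (c θ : Fin n → ℝ)
    (N : Fin n → ℝ → ℝ) (hN : ∀ l, ContDiff ℝ (⊤ : ℕ∞) (N l))
    (hsys : ∀ (l : Fin n) (x : ℝ),
      N l x = Real.exp (-2 * κ l * x + θ l) * (1 + ∑ j, c j * N j x / (κ l + κ j))) :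
    ∀ (l : Fin n) (x : ℝ),
      deriv (deriv (N l)) x + (2 * ∑ j, c j * deriv (N j) x) * N l x
        = -2 * κ l * deriv (N l) x := by
  classical
  have hκκ : ∀ l j : Fin n, κ l + κ j ≠ 0 := fun l j => by
    have h1 := hκpos l; have h2 := hκpos j; positivity
  -- analyticity / differentiability facts
  have hNa : ∀ j, ContDiff ℝ (⊤ : ℕ∞) (N j) := fun j => hN j
  have hNa1 : ∀ j, ContDiff ℝ (⊤ : ℕ∞) (deriv (N j)) :=
    fun j => (contDiff_infty_iff_deriv.mp (hNa j)).2
  have hNa2 : ∀ j, ContDiff ℝ (⊤ : ℕ∞) (deriv (deriv (N j))) :=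
    fun j => (contDiff_infty_iff_deriv.mp (hNa1 j)).2
  have hD0 : ∀ (j : Fin n) (x : ℝ), HasDerivAt (N j) (deriv (N j) x) x :=
    fun j x => (((hNa j).differentiable (by simp)) x).hasDerivAt
  have hD1 : ∀ (j : Fin n) (x : ℝ), HasDerivAt (deriv (N j)) (deriv (deriv (N j)) x) x :=
    fun j x => (((hNa1 j).differentiable (by simp)) x).hasDerivAt
  have hEd : ∀ (l : Fin n) (x : ℝ),
      HasDerivAt (fun x => Real.exp (-2 * κ l * x + θ l))
        (-2 * κ l * Real.exp (-2 * κ l * x + θ l)) x := by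
    intro l x
    have h1 : HasDerivAt (fun x : ℝ => -2 * κ l * x + θ l) (-2 * κ l) x := by
      simpa using ((hasDerivAt_id x).const_mul (-2 * κ l)).add_const (θ l)
    simpa [mul_comm] using h1.exp
  -- first derivative of the linear system
  have hd1 : ∀ (l : Fin n) (x : ℝ),
      deriv (N l) x = -2 * κ l * N l x
        + Real.exp (-2 * κ l * x + θ l) * ∑ j, c j * deriv (N j) x / (κ l + κ j) := by
    intro l x
    have hS : HasDerivAt (fun x => 1 + ∑ j, c j * N j x / (κ l + κ j))
        (∑ j, c j * deriv (N j) x / (κ l + κ j)) x := by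
      refine HasDerivAt.const_add _ (HasDerivAt.fun_sum fun j _ => ?_)
      exact ((hD0 j x).const_mul (c j)).div_const (κ l + κ j)
    have hR := (hEd l x).fun_mul hS
    have hfun : N l = fun x => Real.exp (-2 * κ l * x + θ l)
        * (1 + ∑ j, c j * N j x / (κ l + κ j)) := funext fun x => hsys l x
    rw [← hfun] at hR
    rw [hR.deriv]
    linear_combination (2 * κ l) * hsys l x
  -- second derivative of the linear system
  have hd2 : ∀ (l : Fin n) (x : ℝ),
      deriv (deriv (N l)) x = -2 * κ l * deriv (N l) x
        + (-2 * κ l * Real.exp (-2 * κ l * x + θ l)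
            * ∑ j, c j * deriv (N j) x / (κ l + κ j)
          + Real.exp (-2 * κ l * x + θ l)
            * ∑ j, c j * deriv (deriv (N j)) x / (κ l + κ j)) := by
    intro l x
    have hS' : HasDerivAt (fun x => ∑ j, c j * deriv (N j) x / (κ l + κ j))
        (∑ j, c j * deriv (deriv (N j)) x / (κ l + κ j)) x :=
      HasDerivAt.fun_sum fun j _ => ((hD1 j x).const_mul (c j)).div_const (κ l + κ j)
    have hNl : HasDerivAt (fun x => -2 * κ l * N l x) (-2 * κ l * deriv (N l) x) x :=
      (hD0 l x).const_mul _
    have hR := hNl.fun_add ((hEd l x).fun_mul hS')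
    have hfun : deriv (N l) = fun x => -2 * κ l * N l x
        + Real.exp (-2 * κ l * x + θ l) * ∑ j, c j * deriv (N j) x / (κ l + κ j) :=
      funext fun x => hd1 l x
    rw [← hfun] at hR
    exact hR.deriv
  -- the defect functions
  set D : Fin n → ℝ → ℝ := fun l x => deriv (deriv (N l)) x
      + (2 * ∑ j, c j * deriv (N j) x) * N l x + 2 * κ l * deriv (N l) x with hDdef
  -- key homogeneous system for the defects
  have key : ∀ (l : Fin n) (x : ℝ),
      D l x = Real.exp (-2 * κ l * x + θ l) * ∑ j, c j * D j x / (κ l + κ j) := by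
    intro l x
    have term : ∀ j : Fin n, c j * D j x / (κ l + κ j)
        = c j * deriv (deriv (N j)) x / (κ l + κ j)
          + (2 * ∑ i, c i * deriv (N i) x) * (c j * N j x / (κ l + κ j))
          + (2 * (c j * deriv (N j) x)
            - 2 * κ l * (c j * deriv (N j) x / (κ l + κ j))) := by
      intro j
      have hlj := hκκ l j
      have hjl : κ j + κ l ≠ 0 := by rw [add_comm]; exact hlj
      rw [hDdef]
      field_simp
      ring
    rw [Finset.sum_congr rfl fun j _ => term j]
    rw [Finset.sum_add_distrib, Finset.sum_add_distrib, Finset.sum_sub_distrib,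
      ← Finset.mul_sum, ← Finset.mul_sum, ← Finset.mul_sum]
    have f0 : Real.exp (-2 * κ l * x + θ l) * ∑ j, c j * N j x / (κ l + κ j)
        = N l x - Real.exp (-2 * κ l * x + θ l) := by linear_combination - hsys l x
    have f1 : Real.exp (-2 * κ l * x + θ l) * ∑ j, c j * deriv (N j) x / (κ l + κ j)
        = deriv (N l) x + 2 * κ l * N l x := by linear_combination - hd1 l x
    have f2 : Real.exp (-2 * κ l * x + θ l) * ∑ j, c j * deriv (deriv (N j)) x / (κ l + κ j)
        = deriv (deriv (N l)) x + 2 * κ l * deriv (N l) x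
          + 2 * κ l * (Real.exp (-2 * κ l * x + θ l)
            * ∑ j, c j * deriv (N j) x / (κ l + κ j)) := by
      linear_combination - hd2 l x
    rw [hDdef]
    linear_combination - f2 - (2 * ∑ i, c i * deriv (N i) x) * f0 + 0 * f1
  -- the matrix of the homogeneous system
  set M : ℝ → Matrix (Fin n) (Fin n) ℝ :=
    fun x => Matrix.of fun l j => Real.exp (-2 * κ l * x + θ l) * (c j / (κ l + κ j)) with hMdef
  have hMtend : Tendsto (fun x => (1 : Matrix (Fin n) (Fin n) ℝ) - M x) atTop (𝓝 1) := by
    have hM0 : Tendsto M atTop (𝓝 0) := by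
      apply tendsto_pi_nhds.mpr; intro l
      rw [tendsto_pi_nhds]; intro j
      have h1 : Tendsto (fun x : ℝ => -2 * κ l * x + θ l) atTop atBot := by
        refine tendsto_atBot_add_const_right _ _ ?_
        exact Filter.Tendsto.const_mul_atTop_of_neg
          (by have := hκpos l; linarith) tendsto_id
      have h2 : Tendsto (fun x : ℝ => Real.exp (-2 * κ l * x + θ l)) atTop (𝓝 0) :=
        Real.tendsto_exp_atBot.comp h1
      have h3 := h2.mul_const (c j / (κ l + κ j))
      simpa [hMdef, Matrix.zero_apply, Pi.zero_apply] using h3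
    have h := (tendsto_const_nhds (x := (1 : Matrix (Fin n) (Fin n) ℝ)) (f := atTop)).sub hM0
    simpa using h
  have hdet : Tendsto (fun x => ((1 : Matrix (Fin n) (Fin n) ℝ) - M x).det) atTop (𝓝 1) := by
    have hcont : Continuous fun A : Matrix (Fin n) (Fin n) ℝ => A.det :=
      continuous_id.matrix_det
    have h := (hcont.continuousAt (x := (1 : Matrix (Fin n) (Fin n) ℝ))).tendsto.comp hMtend
    simpa [Matrix.det_one, Function.comp_def] using h
  obtain ⟨x₀, hx₀⟩ : ∃ x₀ : ℝ, ∀ x ≥ x₀, ((1 : Matrix (Fin n) (Fin n) ℝ) - M x).det ≠ 0 := by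
    have h := hdet.eventually_ne (one_ne_zero)
    exact eventually_atTop.mp h
  -- the defects vanish for large x
  have hDIoi : ∀ x, ((1 : Matrix (Fin n) (Fin n) ℝ) - M x).det ≠ 0 → ∀ l, D l x = 0 := by
    intro x hx l
    have hmv : ((1 : Matrix (Fin n) (Fin n) ℝ) - M x) *ᵥ (fun j => D j x) = 0 := by
      rw [Matrix.sub_mulVec, Matrix.one_mulVec]
      funext i
      have hk := key i x
      simp only [Pi.sub_apply, Pi.zero_apply, Matrix.mulVec, dotProduct, hMdef,
        Matrix.of_apply]
      rw [sub_eq_zero, hk, Finset.mul_sum]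
      exact Finset.sum_congr rfl fun j _ => by ring
    have hunit : IsUnit ((1 : Matrix (Fin n) (Fin n) ℝ) - M x).det :=
      isUnit_iff_ne_zero.mpr hx
    have hinv := Matrix.nonsing_inv_mul _ hunit
    have hzero : (fun j => D j x) = 0 := by
      calc (fun j => D j x) = (1 : Matrix (Fin n) (Fin n) ℝ) *ᵥ (fun j => D j x) :=
            (Matrix.one_mulVec _).symm
        _ = (((1 : Matrix (Fin n) (Fin n) ℝ) - M x)⁻¹
              * ((1 : Matrix (Fin n) (Fin n) ℝ) - M x)) *ᵥ (fun j => D j x) := by rw [hinv]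
        _ = ((1 : Matrix (Fin n) (Fin n) ℝ) - M x)⁻¹
              *ᵥ (((1 : Matrix (Fin n) (Fin n) ℝ) - M x) *ᵥ (fun j => D j x)) :=
            (Matrix.mulVec_mulVec _ _ _).symm
        _ = 0 := by rw [hmv, Matrix.mulVec_zero]
    exact congrFun hzero l
  -- the defects are continuous and vanish off the isolated zeros of the determinant
  have hDcont : ∀ l, Continuous (D l) := by
    intro l
    rw [hDdef]
    exact ((hNa2 l).continuous.add ((continuous_const.mul (continuous_finset_sum _
      fun j _ => continuous_const.mul (hNa1 j).continuous)).mul (hNa l).continuous)).add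
      (continuous_const.mul (hNa1 l).continuous)
  have hdetan : AnalyticOnNhd ℝ
      (fun x => ((1 : Matrix (Fin n) (Fin n) ℝ) - M x).det) Set.univ := by
    have hent : ∀ i j : Fin n, AnalyticOnNhd ℝ
        (fun x => ((1 : Matrix (Fin n) (Fin n) ℝ) - M x) i j) Set.univ := by
      intro i j
      simp only [hMdef, Matrix.sub_apply, Matrix.of_apply]
      refine analyticOnNhd_const.sub (AnalyticOnNhd.mul ?_ analyticOnNhd_const)
      exact fun x _ => analyticAt_rexp.comp
        ((analyticAt_const.mul analyticAt_id).add analyticAt_const)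
    simp only [Matrix.det_apply']
    exact Finset.analyticOnNhd_fun_sum _ fun σ _ => analyticOnNhd_const.mul
      (Finset.analyticOnNhd_fun_prod _ fun i _ => hent (σ i) i)
  have hDzero : ∀ (l : Fin n) (x : ℝ), D l x = 0 := by
    intro l x
    have hne : ∀ᶠ y in 𝓝[≠] x, ((1 : Matrix (Fin n) (Fin n) ℝ) - M y).det ≠ 0 := by
      by_contra hcon
      rw [Filter.not_eventually] at hcon
      simp only [not_not] at hcon
      have := hdetan.eqOn_zero_of_preconnected_of_frequently_eq_zero
        isPreconnected_univ (Set.mem_univ x) hcon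
      exact hx₀ x₀ le_rfl (this (Set.mem_univ x₀))
    have hev : D l =ᶠ[𝓝[≠] x] fun _ => 0 := hne.mono fun y hy => hDIoi y hy l
    have h1 : Tendsto (D l) (𝓝[≠] x) (𝓝 (D l x)) :=
      (hDcont l).continuousAt.tendsto.mono_left nhdsWithin_le_nhds
    have h2 : Tendsto (D l) (𝓝[≠] x) (𝓝 0) := tendsto_const_nhds.congr' hev.symm
    exact tendsto_nhds_unique h1 h2
  intro l x
  have h : deriv (deriv (N l)) x + (2 * ∑ j, c j * deriv (N j) x) * N l x
      + 2 * κ l * deriv (N l) x = 0 := hDzero l x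
  linarith [h]
end
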